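/- Let m be a positive integer, fix a reference point r ∈ ℝ^m, let T ⊆ ℝ^m be finite, and let p, q ∈ ℝ^m with p ≤ r and q ≤ r componentwise. Let w ∈ ℝ^m be defined by w_i = max{p_i, q_i} for each coordinate i, and let W = { limit(t, w) | t ∈ T }, where limit(t,w)_i = max{t_i, w_i}. Then HVC(p, T) = HVC(p, T ∪ {q}) + HV({w}) − HV(W); i.e., after the point q is removed, the hypervolume contribution of p is obtained from its old contribution by adding the joint contribution HV({w}) − HV(W) of p and q. (Correctness of the hypervolume contribution update of Algorithm 2 / FV-MOEA.) -/
import Mathlib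


open MeasureTheory

/-- The hypervolume of a finite set `S ⊆ ℝ^m` with respect to a reference
point `r`. -/
noncomputable def HV {m : ℕ} (r : Fin m → ℝ) (S : Finset (Fin m → ℝ)) : ℝ :=
  (volume {z : Fin m → ℝ | ∃ s ∈ S, s ≤ z ∧ z ≤ r}).toReal

/-- The hypervolume contribution of a point `p` to a finite set `S`. -/
noncomputable def HVC {m : ℕ} (r : Fin m → ℝ) (p : Fin m → ℝ)
    (S : Finset (Fin m → ℝ)) : ℝ :=
  HV r (insert p S) - HV r S

/-- The `limit` operation: `limit(t,w)ᵢ = max{tᵢ, wᵢ}` in each coordinate. -/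
def limit {m : ℕ} (t w : Fin m → ℝ) : Fin m → ℝ :=
  fun i => max (t i) (w i)

private lemma HV_eq_biUnion {m : ℕ} (r : Fin m → ℝ) (S : Finset (Fin m → ℝ)) :
    HV r S = (volume (⋃ s ∈ (S : Set (Fin m → ℝ)), Set.Icc s r)).toReal := by
  unfold HV
  have h : {z : Fin m → ℝ | ∃ s ∈ S, s ≤ z ∧ z ≤ r}
      = ⋃ s ∈ (S : Set (Fin m → ℝ)), Set.Icc s r := by
    ext z
    simp only [Set.mem_setOf_eq, Set.mem_iUnion, Finset.mem_coe, Set.mem_Icc, exists_prop]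
  rw [h]

private lemma toReal_add_eq {a b c d : ENNReal} (ha : a ≠ ⊤) (hb : b ≠ ⊤)
    (hc : c ≠ ⊤) (hd : d ≠ ⊤) (h : a + b = c + d) :
    a.toReal + b.toReal = c.toReal + d.toReal := by
  rw [← ENNReal.toReal_add ha hb, ← ENNReal.toReal_add hc hd, h]

/-- Correctness of the hypervolume contribution update of Algorithm 2
(FV-MOEA): for `p ≤ r` and `q ≤ r`, with `w = max{p,q}` componentwise and
`W = { limit(t,w) | t ∈ T }`, we have
`HVC(p, T) = HVC(p, T ∪ {q}) + HV({w}) − HV(W)`. -/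
theorem hvc_update_formula (m : ℕ) (hm : 0 < m) (r : Fin m → ℝ)
    (T : Finset (Fin m → ℝ)) (p q : Fin m → ℝ) (hpr : p ≤ r) (hqr : q ≤ r) :
    HVC r p T =
      HVC r p (insert q T) +
        (HV r {fun i => max (p i) (q i)} -
          HV r (T.image fun t => limit t (fun i => max (p i) (q i)))) := by
  classical
  set w : Fin m → ℝ := fun i => max (p i) (q i) with hw
  set P := Set.Icc p r with hP
  set Q := Set.Icc q r with hQ
  set A := ⋃ t ∈ (T : Set (Fin m → ℝ)), Set.Icc t r with hA
  have hQAmeas : MeasurableSet (Q ∪ A) :=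
    measurableSet_Icc.union (T.measurableSet_biUnion fun _ _ => measurableSet_Icc)
  have hAmeas : MeasurableSet A :=
    T.measurableSet_biUnion fun _ _ => measurableSet_Icc
  have hIccfin : ∀ s : Fin m → ℝ, volume (Set.Icc s r) ≠ ⊤ := fun s =>
    isCompact_Icc.measure_lt_top.ne
  have hPfin : volume P ≠ ⊤ := hIccfin p
  have hQfin : volume Q ≠ ⊤ := hIccfin q
  have hAfin : volume A ≠ ⊤ :=
    (measure_biUnion_lt_top T.finite_toSet fun t _ => isCompact_Icc.measure_lt_top).ne
  have hQAfin : volume (Q ∪ A) ≠ ⊤ := by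
    exact ((measure_union_le Q A).trans_lt
      (ENNReal.add_lt_top.2 ⟨hQfin.lt_top, hAfin.lt_top⟩)).ne
  -- key set identities
  have hPQ : P ∩ Q = Set.Icc w r := by
    rw [hP, hQ, Set.Icc_inter_Icc, inf_idem]
    rfl
  have hWset : (⋃ s ∈ ((T.image fun t => limit t w) : Set (Fin m → ℝ)), Set.Icc s r)
      = A ∩ (P ∩ Q) := by
    rw [hPQ]
    ext z
    simp only [Set.mem_iUnion, Finset.coe_image, Set.mem_image, Finset.mem_coe,
      Set.mem_inter_iff, Set.mem_Icc, hA, exists_prop, exists_exists_and_eq_and]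
    constructor
    · rintro ⟨t, ht, hle, hzr⟩
      have h1 : t ≤ z := le_trans (le_sup_left : t ≤ limit t w) hle
      have h2 : w ≤ z := le_trans (le_sup_right : w ≤ limit t w) hle
      exact ⟨⟨t, ht, h1, hzr⟩, h2, hzr⟩
    · rintro ⟨⟨t, ht, h1, hzr⟩, h2, _⟩
      exact ⟨t, ht, sup_le h1 h2, hzr⟩
  -- rewrite all HV values as volumes
  have hHVT : HV r T = (volume A).toReal := HV_eq_biUnion r T
  have hHVpT : HV r (insert p T) = (volume (P ∪ A)).toReal := by
    rw [HV_eq_biUnion]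
    congr 2
    simp [Set.biUnion_insert, hA, hP]
  have hHVqT : HV r (insert q T) = (volume (Q ∪ A)).toReal := by
    rw [HV_eq_biUnion]
    congr 2
    simp [Set.biUnion_insert, hA, hQ]
  have hHVpqT : HV r (insert p (insert q T)) = (volume (P ∪ (Q ∪ A))).toReal := by
    rw [HV_eq_biUnion]
    congr 2
    simp [Set.biUnion_insert, hA, hP, hQ, Set.union_assoc]
  have hHVw : HV r {w} = (volume (P ∩ Q)).toReal := by
    rw [HV_eq_biUnion, hPQ]
    congr 2
    simp
  have hHVW : HV r (T.image fun t => limit t w) = (volume (A ∩ (P ∩ Q))).toReal := by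
    rw [HV_eq_biUnion, hWset]
  -- inclusion-exclusion identities
  have hPQAfin : volume (P ∩ A) ≠ ⊤ :=
    ((measure_mono Set.inter_subset_left).trans_lt hPfin.lt_top).ne
  have hPQfin : volume (P ∩ Q) ≠ ⊤ :=
    ((measure_mono Set.inter_subset_left).trans_lt hPfin.lt_top).ne
  have hPQAfin' : volume (P ∩ Q ∩ A) ≠ ⊤ :=
    ((measure_mono Set.inter_subset_left).trans_lt hPQfin.lt_top).ne
  have hPAfin : volume (P ∪ A) ≠ ⊤ :=
    ((measure_union_le P A).trans_lt
      (ENNReal.add_lt_top.2 ⟨hPfin.lt_top, hAfin.lt_top⟩)).ne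
  have hPQAufin : volume (P ∪ (Q ∪ A)) ≠ ⊤ :=
    ((measure_union_le P (Q ∪ A)).trans_lt
      (ENNReal.add_lt_top.2 ⟨hPfin.lt_top, hQAfin.lt_top⟩)).ne
  have hPiQAfin : volume (P ∩ (Q ∪ A)) ≠ ⊤ :=
    ((measure_mono Set.inter_subset_left).trans_lt hPfin.lt_top).ne
  have e1 : (volume (P ∪ A)).toReal + (volume (P ∩ A)).toReal
      = (volume P).toReal + (volume A).toReal :=
    toReal_add_eq hPAfin hPQAfin hPfin hAfin (measure_union_add_inter P hAmeas)
  have e2 : (volume (P ∪ (Q ∪ A))).toReal + (volume (P ∩ (Q ∪ A))).toReal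
      = (volume P).toReal + (volume (Q ∪ A)).toReal :=
    toReal_add_eq hPQAufin hPiQAfin hPfin hQAfin (measure_union_add_inter P hQAmeas)
  have e3 : P ∩ (Q ∪ A) = (P ∩ Q) ∪ (P ∩ A) := Set.inter_union_distrib_left P Q A
  have e4set : (P ∩ Q) ∩ (P ∩ A) = A ∩ (P ∩ Q) := by
    ext z
    simp only [Set.mem_inter_iff]
    tauto
  have hPQmeas : MeasurableSet (P ∩ A) := measurableSet_Icc.inter hAmeas
  have hPQAinterfin : volume ((P ∩ Q) ∩ (P ∩ A)) ≠ ⊤ :=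
    ((measure_mono Set.inter_subset_left).trans_lt hPQfin.lt_top).ne
  have hPQuPAfin : volume ((P ∩ Q) ∪ (P ∩ A)) ≠ ⊤ :=
    ((measure_union_le _ _).trans_lt
      (ENNReal.add_lt_top.2 ⟨hPQfin.lt_top, hPQAfin.lt_top⟩)).ne
  have e4 : (volume ((P ∩ Q) ∪ (P ∩ A))).toReal + (volume ((P ∩ Q) ∩ (P ∩ A))).toReal
      = (volume (P ∩ Q)).toReal + (volume (P ∩ A)).toReal :=
    toReal_add_eq hPQuPAfin hPQAinterfin hPQfin hPQAfin
      (measure_union_add_inter (P ∩ Q) hPQmeas)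
  rw [e3] at e2
  rw [e4set] at e4
  unfold HVC
  rw [hHVT, hHVpT, hHVqT, hHVpqT, hHVw, hHVW]
  linarith
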